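/- Let V be a doubled word, Σ a finite alphabet with q ≥ 2 letters, and W_n ∈ Σ^n chosen uniformly at random. Then E(δ(V,W_n)) = Θ(1/n): there exist constants 0 < c_1 ≤ c_2 and an integer N such that c_1/n ≤ E(δ(V,W_n)) ≤ c_2/n for all n > N. -/

import Mathlib

open Filter Asymptotics

/-- The substring `W[i,j]` of `W`: the `j - i` consecutive letters of `W`
beginning with the `(i+1)`-th. -/
def subword {β : Type*} (W : List β) (i j : ℕ) : List β :=
  (W.drop i).take (j - i)

/-- `W` is an instance of `V` provided `W = φ(V)` for some nonerasing
homomorphism `φ`, i.e. a map on letters (no letter mapping to the empty word)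
extended by concatenation. -/
def IsInstance {α β : Type*} (V : List α) (W : List β) : Prop :=
  ∃ φ : α → List β, (∀ a, φ a ≠ []) ∧ W = (V.map φ).flatten

/-- A word is doubled provided every letter occurring in it occurs at least twice. -/
def Doubled {α : Type*} [DecidableEq α] (V : List α) : Prop :=
  ∀ a ∈ V, 2 ≤ V.count a

open Classical in
/-- `density V W` is the proportion of the `C(|W|+1, 2)` substrings of `W`
(indexed by pairs `(i,j)` with `0 ≤ i < j ≤ |W|`) that are instances of `V`. -/
noncomputable def density {α β : Type*} (V : List α) (W : List β) : ℝ :=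
  (((Finset.range (W.length + 1) ×ˢ Finset.range (W.length + 1)).filter
      (fun p => p.1 < p.2 ∧ IsInstance V (subword W p.1 p.2))).card : ℝ) /
    (Nat.choose (W.length + 1) 2)

/-- The expected density of `V` in a word of length `n` chosen uniformly at
random over the alphabet `σ` (words of length `n` being encoded as `Fin n → σ`). -/
noncomputable def expDensity {α : Type*} (V : List α) (σ : Type*) [Fintype σ] (n : ℕ) : ℝ :=
  (∑ w : Fin n → σ, density V (List.ofFn w)) / (Fintype.card σ : ℝ) ^ n

/-- `homCount V W` counts the encounters of `V` in `W`: triples `(a, b, φ)`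
where `φ` is a nonerasing homomorphism from the letters of `V` with
`W[a,b] = φ(V)`. -/
noncomputable def homCount {α σ : Type*} (V : List α) (W : List σ) : ℕ :=
  Set.ncard {t : ℕ × ℕ × ({a : α // a ∈ V} → List σ) |
    t.1 < t.2.1 ∧ t.2.1 ≤ W.length ∧ (∀ a, t.2.2 a ≠ []) ∧
    subword W t.1 t.2.1 = (V.attach.map t.2.2).flatten}

/-- Expected number of encounters of `V` in a uniformly random word of length `n`. -/
noncomputable def expHom {α : Type*} (V : List α) (σ : Type*) [Fintype σ] (n : ℕ) : ℝ :=
  (∑ w : Fin n → σ, (homCount V (List.ofFn w) : ℝ)) / (Fintype.card σ : ℝ) ^ n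

/-- `instProb V σ m` is the proportion of words in `σ^m` that are instances of `V`. -/
noncomputable def instProb {α : Type*} (V : List α) (σ : Type*) [Fintype σ] (m : ℕ) : ℝ :=
  (Nat.card {w : Fin m → σ // IsInstance V (List.ofFn w)} : ℝ) / (Fintype.card σ : ℝ) ^ m

/-- The variance of the density of `V` in a uniformly random word of length `n`. -/
noncomputable def varDensity {α : Type*} (V : List α) (σ : Type*) [Fintype σ] (n : ℕ) : ℝ :=
  (∑ w : Fin n → σ, (density V (List.ofFn w) - expDensity V σ n) ^ 2) /
    (Fintype.card σ : ℝ) ^ n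

/-!
Averaging over the random word, `E δ(V, W_n)` is the average, over the `C(n+1, 2)` positions
`(i, j)`, of the probability `p(j - i)` that a uniformly random word of length `j - i` is a
`V`-instance. Mapping every letter to one fixed letter gives `p(|V|) ≥ q^{-|V|}`, and the
`n + 1 - |V|` positions of length `|V|` give the lower bound. Since `V` is doubled, an instance
of length `m` is determined by the lengths of the images of the letters of `V` together with the
concatenation of the images of its distinct letters, a word of length at most `m / 2`. Hence
`p(m) ≤ (m + 1)^k q^{-m/2}`, which is summable in `m`, and since at most `n + 1` positions share
each length, the sum over positions is `O(n)`.
-/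

lemma subword_ofFn {σ : Type*} {n : ℕ} (w : Fin n → σ) {i m : ℕ} (h : i + m ≤ n) :
    subword (List.ofFn w) i (i + m) = List.ofFn (fun t : Fin m => w ⟨i + t, by omega⟩) := by
  apply List.ext_getElem
  · simp only [subword, List.length_take, List.length_drop, List.length_ofFn]; omega
  · intro t _ _
    simp only [subword, List.getElem_take, List.getElem_drop, List.getElem_ofFn]

lemma card_subword_ofFn_eq {σ : Type*} [Fintype σ] (P : List σ → Prop) {n i m : ℕ}
    (h : i + m ≤ n) :
    Nat.card {w : Fin n → σ // P (subword (List.ofFn w) i (i + m))} =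
      Nat.card {b : Fin m → σ // P (List.ofFn b)} * Fintype.card σ ^ (n - m) := by
  classical
  let p : Fin n → Prop := fun u => i ≤ u ∧ (u : ℕ) < i + m
  let e : Fin m ≃ {u // p u} :=
    { toFun t := ⟨⟨i + t, by omega⟩, by simp [p]⟩
      invFun u := ⟨u.1 - i, by omega⟩
      left_inv t := by ext; simp
      right_inv u := by ext; simp; omega }
  have hcompl : Fintype.card {u // ¬ p u} = n - m := by
    rw [Fintype.card_subtype_compl, ← Fintype.card_congr e, Fintype.card_fin, Fintype.card_fin]
  calc Nat.card {w : Fin n → σ // P (subword (List.ofFn w) i (i + m))}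
      = Nat.card {x : ({u // p u} → σ) × ({u // ¬ p u} → σ) // P (List.ofFn (x.1 ∘ e))} :=
        Nat.card_congr <| (Equiv.piEquivPiSubtypeProd p fun _ => σ).subtypeEquiv fun w => by
          rw [subword_ofFn w h]; rfl
    _ = Nat.card ({a : {u // p u} → σ // P (List.ofFn (a ∘ e))} × ({u // ¬ p u} → σ)) :=
        Nat.card_congr <| Equiv.prodSubtypeFstEquivSubtypeProd (β := {u // ¬ p u} → σ)
          (p := fun a => P (List.ofFn (a ∘ e)))
    _ = Nat.card {b : Fin m → σ // P (List.ofFn b)} * Fintype.card σ ^ (n - m) := by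
        rw [Nat.card_prod, Nat.card_eq_fintype_card (α := _ → σ), Fintype.card_fun, hcompl]
        congr 1
        exact Nat.card_congr <| (e.arrowCongr (Equiv.refl σ)).symm.subtypeEquiv fun _ => Iff.rfl

def substringPairs (n : ℕ) : Finset (ℕ × ℕ) :=
  (Finset.range (n + 1) ×ˢ Finset.range (n + 1)).filter fun p => p.1 < p.2

lemma expDensity_eq_sum_instProb {α σ : Type*} [Fintype σ] [Nonempty σ] (V : List α) (n : ℕ) :
    expDensity V σ n =
      (∑ p ∈ substringPairs n, instProb V σ (p.2 - p.1)) / (n + 1).choose 2 := by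
  classical
  have hcount : ∀ p ∈ substringPairs n,
      (Nat.card {w : Fin n → σ // IsInstance V (subword (List.ofFn w) p.1 p.2)} : ℝ) /
        (Fintype.card σ : ℝ) ^ n = instProb V σ (p.2 - p.1) := by
    intro p hp
    simp only [substringPairs, Finset.mem_filter, Finset.mem_product, Finset.mem_range] at hp
    have hcard := card_subword_ofFn_eq (σ := σ) (IsInstance V) (i := p.1) (m := p.2 - p.1)
      (n := n) (by omega)
    rw [Nat.add_sub_cancel' hp.2.le] at hcard
    rw [hcard, instProb, Nat.cast_mul, Nat.cast_pow, ← pow_mul_pow_sub _ (by omega : p.2 - p.1 ≤ n),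
      mul_div_mul_right _ _ (by positivity)]
  have hswap : ∑ w : Fin n → σ, ((substringPairs n).filter
        fun p => IsInstance V (subword (List.ofFn w) p.1 p.2)).card =
      ∑ p ∈ substringPairs n,
        Nat.card {w : Fin n → σ // IsInstance V (subword (List.ofFn w) p.1 p.2)} := by
    simpa [Finset.bipartiteAbove, Finset.bipartiteBelow, Nat.card_eq_fintype_card,
      Fintype.card_subtype] using
      Finset.sum_card_bipartiteAbove_eq_sum_card_bipartiteBelow (s := Finset.univ)
        (t := substringPairs n)
        (r := fun (w : Fin n → σ) p => IsInstance V (subword (List.ofFn w) p.1 p.2))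
  unfold expDensity density
  simp only [List.length_ofFn, ← Finset.sum_div, div_right_comm _ _ ((Fintype.card σ : ℝ) ^ n)]
  rw [← Finset.sum_congr rfl hcount, ← Finset.sum_div, ← Nat.cast_sum, ← Nat.cast_sum, ← hswap]
  simp only [substringPairs, Finset.filter_filter]

lemma sum_substringPairs_le {f : ℕ → ℝ} (hf : ∀ m, 0 ≤ f m) (n : ℕ) :
    ∑ p ∈ substringPairs n, f (p.2 - p.1) ≤ (n + 1) * ∑ m ∈ Finset.range (n + 1), f m := by
  have hinj : Set.InjOn (fun p : ℕ × ℕ => (p.1, p.2 - p.1)) (substringPairs n) := by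
    rintro ⟨i, j⟩ hij ⟨i', j'⟩ hij' h
    simp only [substringPairs, Finset.coe_filter, Finset.mem_product, Finset.mem_range,
      Set.mem_ofPred_eq, Prod.mk.injEq] at hij hij' h ⊢
    omega
  calc ∑ p ∈ substringPairs n, f (p.2 - p.1)
      = ∑ p ∈ (substringPairs n).image fun p => (p.1, p.2 - p.1), f p.2 :=
        (Finset.sum_image (f := fun p : ℕ × ℕ => f p.2) hinj).symm
    _ ≤ ∑ p ∈ Finset.range (n + 1) ×ˢ Finset.range (n + 1), f p.2 := by
        refine Finset.sum_le_sum_of_subset_of_nonneg ?_ fun _ _ _ => hf _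
        simp only [substringPairs, Finset.subset_iff, Finset.mem_image, Finset.mem_filter,
          Finset.mem_product, Finset.mem_range]
        rintro _ ⟨p, hp, rfl⟩
        omega
    _ = (n + 1) * ∑ m ∈ Finset.range (n + 1), f m := by
        simp only [Finset.sum_product, Finset.sum_const, Finset.card_range, nsmul_eq_mul]
        push_cast; ring

lemma le_sum_substringPairs {f : ℕ → ℝ} (hf : ∀ m, 0 ≤ f m) {L : ℕ} (hL : 0 < L) (n : ℕ) :
    ((n + 1 - L : ℕ) : ℝ) * f L ≤ ∑ p ∈ substringPairs n, f (p.2 - p.1) := by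
  calc ((n + 1 - L : ℕ) : ℝ) * f L
      = ∑ p ∈ (Finset.range (n + 1 - L)).image fun i => (i, i + L), f (p.2 - p.1) := by
        rw [Finset.sum_image fun _ _ _ _ h => (Prod.mk.inj h).1]
        simp
    _ ≤ ∑ p ∈ substringPairs n, f (p.2 - p.1) := by
        refine Finset.sum_le_sum_of_subset_of_nonneg ?_ fun _ _ _ => hf _
        simp only [substringPairs, Finset.subset_iff, Finset.mem_image, Finset.mem_filter,
          Finset.mem_product, Finset.mem_range]
        rintro _ ⟨p, hp, rfl⟩
        omega

lemma List.eq_of_flatten_eq_of_map_length_eq {σ : Type*} :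
    ∀ {L₁ L₂ : List (List σ)}, L₁.map length = L₂.map length → L₁.flatten = L₂.flatten → L₁ = L₂
  | [], [], _, _ => rfl
  | a :: L₁, b :: L₂, hl, hf => by
    simp only [map_cons, cons.injEq] at hl
    obtain ⟨rfl, hf'⟩ := append_inj hf hl.1
    rw [eq_of_flatten_eq_of_map_length_eq hl.2 hf']
  | [], _ :: _, hl, _ | _ :: _, [], hl, _ => by simp at hl

lemma one_le_card_instances_length {α σ : Type*} [Finite σ] [Nonempty σ] (V : List α) :
    1 ≤ Nat.card {b : Fin V.length → σ // IsInstance V (List.ofFn b)} := by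
  have : Nonempty {b : Fin V.length → σ // IsInstance V (List.ofFn b)} := by
    let s : σ := Classical.arbitrary σ
    refine ⟨fun _ => s, fun _ => [s], fun _ => List.cons_ne_nil _ _, ?_⟩
    rw [List.ofFn_const, List.map_const', List.flatten_replicate_singleton]
  exact Nat.card_pos

section Instances

variable {α σ : Type*} [DecidableEq α]

lemma length_flatten_map_eq_sum_count (V : List α) (φ : α → List σ) :
    ((V.map φ).flatten).length = ∑ a ∈ V.toFinset, V.count a * (φ a).length := by
  rw [List.length_flatten, List.map_map, Finset.sum_list_map_count]
  rfl

lemma Doubled.two_mul_sum_length_le {V : List α} (hV : Doubled V) (φ : α → List σ) :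
    2 * ∑ a ∈ V.toFinset, (φ a).length ≤ ((V.map φ).flatten).length := by
  rw [length_flatten_map_eq_sum_count, Finset.mul_sum]
  exact Finset.sum_le_sum fun a ha => Nat.mul_le_mul_right _ (hV a (List.mem_toFinset.mp ha))

lemma length_flatten_dedup_map (V : List α) (φ : α → List σ) :
    ((V.dedup.map φ).flatten).length = ∑ a ∈ V.toFinset, (φ a).length := by
  rw [List.length_flatten, List.map_map, ← List.sum_toFinset _ V.nodup_dedup]
  exact Finset.sum_congr (by ext; simp) fun _ _ => rfl

lemma map_eq_of_flatten_dedup_map_eq {V : List α} {φ ψ : α → List σ}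
    (hlen : ∀ a ∈ V, (φ a).length = (ψ a).length)
    (h : (V.dedup.map φ).flatten = (V.dedup.map ψ).flatten) : V.map φ = V.map ψ := by
  have hdedup : V.dedup.map φ = V.dedup.map ψ := by
    refine List.eq_of_flatten_eq_of_map_length_eq ?_ h
    simp only [List.map_map]
    exact List.map_congr_left fun a ha => hlen a (List.mem_dedup.mp ha)
  exact List.map_inj_left.mpr fun a ha =>
    List.map_inj_left.mp hdedup a (List.mem_dedup.mpr ha)

lemma card_instances_le [Fintype σ] [Nonempty σ] {V : List α} (hV : Doubled V) (m : ℕ) :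
    Nat.card {b : Fin m → σ // IsInstance V (List.ofFn b)} ≤
      (m + 1) ^ V.toFinset.card * Fintype.card σ ^ (m / 2) := by
  choose φ _ hφ using fun x : {b : Fin m → σ // IsInstance V (List.ofFn b)} => x.2
  have hm : ∀ x, ((V.map (φ x)).flatten).length = m := fun x => by
    rw [← hφ x, List.length_ofFn]
  have hlen : ∀ x, ∀ a ∈ V, (φ x a).length < m + 1 := fun x a ha =>
    Nat.lt_succ_of_le <| hm x ▸ (List.sublist_flatten_of_mem (List.mem_map_of_mem ha)).length_le
  have hdedup : ∀ x, ((V.dedup.map (φ x)).flatten).length ≤ m / 2 := fun x => by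
    have := (hV.two_mul_sum_length_le (φ x)).trans_eq (hm x)
    rw [length_flatten_dedup_map]
    omega
  let F (x : {b : Fin m → σ // IsInstance V (List.ofFn b)}) :
      ({a // a ∈ V.toFinset} → Fin (m + 1)) × List.Vector σ (m / 2) :=
    (fun a => ⟨(φ x a).length, hlen x a (List.mem_toFinset.mp a.2)⟩,
      ⟨(V.dedup.map (φ x)).flatten.rightpad (m / 2) (Classical.arbitrary σ), by
        rw [List.length_rightpad, max_eq_left (hdedup x)]⟩)
  have hF : F.Injective := by
    intro x y hxy
    obtain ⟨hlengths, hpad⟩ := Prod.ext_iff.mp hxy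
    have hlen_eq : ∀ a ∈ V, (φ x a).length = (φ y a).length := fun a ha =>
      congrArg Fin.val (congrFun hlengths ⟨a, List.mem_toFinset.mpr ha⟩)
    have hflat : (V.dedup.map (φ x)).flatten = (V.dedup.map (φ y)).flatten := by
      refine List.append_inj_left (congrArg Subtype.val hpad) ?_
      rw [length_flatten_dedup_map, length_flatten_dedup_map]
      exact Finset.sum_congr rfl fun a ha => hlen_eq a (List.mem_toFinset.mp ha)
    refine Subtype.ext (List.ofFn_injective ?_)
    rw [hφ, hφ, map_eq_of_flatten_dedup_map_eq hlen_eq hflat]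
  calc Nat.card {b : Fin m → σ // IsInstance V (List.ofFn b)}
      ≤ Nat.card (({a // a ∈ V.toFinset} → Fin (m + 1)) × List.Vector σ (m / 2)) :=
        Nat.card_le_card_of_injective F hF
    _ = (m + 1) ^ V.toFinset.card * Fintype.card σ ^ (m / 2) := by
        simp only [Nat.card_eq_fintype_card, Fintype.card_prod, Fintype.card_fun, card_vector,
          Fintype.card_fin, Fintype.card_coe]

end Instances

lemma pow_div_two_le_sqrt_pow {q : ℝ} (hq : 1 ≤ q) (m : ℕ) : q ^ (m / 2) ≤ √q ^ m := by
  calc q ^ (m / 2) = √q ^ (2 * (m / 2)) := by rw [pow_mul, Real.sq_sqrt (by linarith)]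
    _ ≤ √q ^ m := pow_le_pow_right₀ (Real.one_le_sqrt.mpr hq) (Nat.mul_div_le m 2)

lemma instProb_nonneg {α σ : Type*} [Fintype σ] (V : List α) (m : ℕ) : 0 ≤ instProb V σ m := by
  unfold instProb; positivity

lemma instProb_le {α σ : Type*} [DecidableEq α] [Fintype σ] [Nonempty σ] {V : List α}
    (hV : Doubled V) (m : ℕ) :
    instProb V σ m ≤ ((m : ℝ) + 1) ^ V.toFinset.card * (√(Fintype.card σ))⁻¹ ^ m := by
  have hcard : (Nat.card {b : Fin m → σ // IsInstance V (List.ofFn b)} : ℝ) ≤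
      ((m : ℝ) + 1) ^ V.toFinset.card * (Fintype.card σ : ℝ) ^ (m / 2) := by
    exact_mod_cast card_instances_le (σ := σ) hV m
  have hq : (1 : ℝ) ≤ Fintype.card σ := Nat.one_le_cast.mpr Fintype.card_pos
  set q : ℝ := (Fintype.card σ : ℝ)
  calc instProb V σ m ≤ ((m : ℝ) + 1) ^ V.toFinset.card * q ^ (m / 2) / q ^ m := by
        rw [instProb]; gcongr
    _ ≤ ((m : ℝ) + 1) ^ V.toFinset.card * √q ^ m / (√q ^ m * √q ^ m) := by
        rw [← mul_pow, Real.mul_self_sqrt (by linarith)]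
        gcongr
        exact pow_div_two_le_sqrt_pow hq m
    _ = ((m : ℝ) + 1) ^ V.toFinset.card * (√q)⁻¹ ^ m := by
        rw [mul_div_mul_right _ _ (by positivity), div_eq_mul_inv, inv_pow]

lemma inv_pow_length_le_instProb {α σ : Type*} [Fintype σ] [Nonempty σ] (V : List α) :
    ((Fintype.card σ : ℝ) ^ V.length)⁻¹ ≤ instProb V σ V.length := by
  rw [instProb, inv_eq_one_div]
  gcongr
  exact_mod_cast one_le_card_instances_length (σ := σ) V

lemma summable_add_one_pow_mul_geometric (K : ℕ) {r : ℝ} (hr₀ : 0 < r) (hr₁ : r < 1) :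
    Summable fun m : ℕ => ((m : ℝ) + 1) ^ K * r ^ m := by
  have hshift : Summable fun m : ℕ => ((m + 1 : ℕ) : ℝ) ^ K * r ^ (m + 1) :=
    (summable_nat_add_iff (f := fun m : ℕ => (m : ℝ) ^ K * r ^ m) 1).mpr <|
      summable_pow_mul_geometric_of_norm_lt_one K <| by rwa [Real.norm_of_nonneg hr₀.le]
  refine (hshift.mul_left r⁻¹).congr fun m => ?_
  push_cast
  field_simp
  ring

lemma inv_pow_length_div_le_expDensity {α σ : Type*} [Fintype σ] [Nonempty σ] {V : List α}
    (hV : V ≠ []) {n : ℕ} (hn : 2 * V.length ≤ n) :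
    ((Fintype.card σ : ℝ) ^ V.length)⁻¹ / n ≤ expDensity V σ n := by
  have hL : 0 < V.length := List.length_pos_iff.mpr hV
  have hn₀ : (0 : ℝ) < n := by exact_mod_cast (by omega : 0 < n)
  have hnL : (2 * V.length : ℝ) ≤ n := by exact_mod_cast hn
  set c : ℝ := ((Fintype.card σ : ℝ) ^ V.length)⁻¹
  have hc : 0 < c := by positivity
  rw [expDensity_eq_sum_instProb, Nat.cast_choose_two, Nat.cast_add_one, add_sub_cancel_right]
  calc c / n ≤ ((n + 1 - V.length : ℕ) : ℝ) * c / ((n + 1) * n / 2) := by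
        rw [Nat.cast_sub (by omega), div_le_div_iff₀ hn₀ (by positivity)]
        push_cast
        nlinarith [mul_nonneg (mul_nonneg hc.le hn₀.le)
          (by linarith : (0 : ℝ) ≤ n + 1 - 2 * V.length)]
    _ ≤ ((n + 1 - V.length : ℕ) : ℝ) * instProb V σ V.length / ((n + 1) * n / 2) := by
        gcongr
        exact inv_pow_length_le_instProb V
    _ ≤ (∑ p ∈ substringPairs n, instProb V σ (p.2 - p.1)) / ((n + 1) * n / 2) := by
        gcongr
        exact le_sum_substringPairs (instProb_nonneg V) hL n

lemma expDensity_le {α σ : Type*} [DecidableEq α] [Fintype σ] {V : List α} (hV : Doubled V)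
    (hq : 2 ≤ Fintype.card σ) (n : ℕ) :
    expDensity V σ n ≤
      2 * (∑' m : ℕ, ((m : ℝ) + 1) ^ V.toFinset.card * (√(Fintype.card σ))⁻¹ ^ m) / n := by
  have : Nonempty σ := Fintype.card_pos_iff.mp (by omega)
  set g : ℕ → ℝ := fun m => ((m : ℝ) + 1) ^ V.toFinset.card * (√(Fintype.card σ))⁻¹ ^ m
  have hg : Summable g := by
    have hsqrt : 1 < √(Fintype.card σ : ℝ) :=
      Real.lt_sqrt_of_sq_lt (by norm_num; exact_mod_cast hq)
    exact summable_add_one_pow_mul_geometric _ (by positivity) (inv_lt_one_of_one_lt₀ hsqrt)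
  have hg₀ : ∀ m, 0 ≤ g m := fun m => by positivity
  rw [expDensity_eq_sum_instProb, Nat.cast_choose_two, Nat.cast_add_one, add_sub_cancel_right]
  calc (∑ p ∈ substringPairs n, instProb V σ (p.2 - p.1)) / ((n + 1) * n / 2)
      ≤ (∑ p ∈ substringPairs n, g (p.2 - p.1)) / ((n + 1) * n / 2) := by
        gcongr with p
        exact instProb_le hV _
    _ ≤ (n + 1) * (∑' m, g m) / ((n + 1) * n / 2) := by
        gcongr
        exact (sum_substringPairs_le hg₀ n).trans <| by
          gcongr; exact hg.sum_le_tsum _ fun m _ => hg₀ m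
    _ = 2 * (∑' m, g m) / n := by
        rw [mul_div_assoc ((n : ℝ) + 1) (n : ℝ) 2, mul_div_mul_left _ _ (by positivity),
          div_div_eq_mul_div, mul_comm]

/-- For a doubled word `V` and `|Σ| = q ≥ 2`, `E(δ(V,W_n)) = Θ(1/n)`. -/
theorem stmt12 {α σ : Type*} [DecidableEq α] [Fintype σ] (V : List α) (hV : V ≠ [])
    (hdbl : Doubled V) (hq : 2 ≤ Fintype.card σ) :
    ∃ c₁ c₂ : ℝ, 0 < c₁ ∧ c₁ ≤ c₂ ∧ ∃ N : ℕ, ∀ n : ℕ, N < n →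
      c₁ / n ≤ expDensity V σ n ∧ expDensity V σ n ≤ c₂ / n := by
  have : Nonempty σ := Fintype.card_pos_iff.mp (by omega)
  set c₁ : ℝ := ((Fintype.card σ : ℝ) ^ V.length)⁻¹
  set c₂ : ℝ := 2 * ∑' m : ℕ, ((m : ℝ) + 1) ^ V.toFinset.card * (√(Fintype.card σ))⁻¹ ^ m
  refine ⟨c₁, max c₁ c₂, by positivity, le_max_left _ _, 2 * V.length, fun n hn =>
    ⟨inv_pow_length_div_le_expDensity hV hn.le, (expDensity_le hdbl hq n).trans ?_⟩⟩
  gcongr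
  exact le_max_right _ _
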